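/- The truncation operator maps into 𝔽_p: for every even p ≥ 4 and every rational r, ⟦r⟧_p ∈ 𝔽_p. -/

import Mathlib

/-- `len n` is the length of the binary representation of `n`:
`⌈log₂ (|n|+1)⌉ + 1` (sign bit plus magnitude bits). -/
def len (n : ℤ) : ℕ := Nat.clog 2 (n.natAbs + 1) + 1

/-- The floats of precision `p`. -/
def Fp (p : ℕ) : Set ℚ :=
  {x | ∃ m z : ℤ, x = (m : ℚ) * 2 ^ z ∧ (len m : ℚ) ≤ (p : ℚ) / 2 ∧ (len z : ℚ) ≤ (p : ℚ) / 2}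

/-- The largest integer `z` with `-q ≤ z ≤ q` and `r * 2^z ≤ q`. -/
noncomputable def zsel (q : ℤ) (r : ℚ) : ℤ :=
  sSup {z : ℤ | -q ≤ z ∧ z ≤ q ∧ r * 2 ^ z ≤ (q : ℚ)}

/-- Truncation for nonnegative rationals. -/
noncomputable def truncNN (q : ℤ) (r : ℚ) : ℚ :=
  if (q : ℚ) * 2 ^ q < r then (q : ℚ) * 2 ^ q
  else (⌊r * 2 ^ zsel q r⌋ : ℚ) * 2 ^ (-(zsel q r))

/-- Truncation `⟦r⟧_p` of a rational `r` to a float of precision `p`. -/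
noncomputable def trunc (p : ℕ) (r : ℚ) : ℚ :=
  if r < 0 then -truncNN (2 ^ (p / 2 - 1) - 1) (-r) else truncNN (2 ^ (p / 2 - 1) - 1) r

theorem trunc_mem_Fp (p : ℕ) (hp : Even p) (hp4 : 4 ≤ p) (r : ℚ) :
    trunc p r ∈ Fp p := by
  set k : ℕ := p / 2 with hk
  have hpk : p = 2 * k := by
    obtain ⟨t, ht⟩ := hp; omega
  have hk2 : 2 ≤ k := by omega
  set Q : ℕ := 2 ^ (k - 1) with hQ
  have hQ2 : 2 ≤ Q := by
    calc (2:ℕ) = 2 ^ 1 := rfl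
    _ ≤ 2 ^ (k - 1) := Nat.pow_le_pow_right (by norm_num) (by omega)
  set q : ℤ := 2 ^ (k - 1) - 1 with hq
  have hqQ : q = (Q : ℤ) - 1 := by rw [hq, hQ]; push_cast; ring
  have hq1 : 1 ≤ q := by omega
  have hp2 : (p : ℚ) / 2 = (k : ℚ) := by rw [hpk]; push_cast; ring
  -- length bound
  have hlen : ∀ m : ℤ, m.natAbs ≤ Q - 1 → (len m : ℚ) ≤ (p : ℚ) / 2 := by
    intro m hm
    rw [hp2, Nat.cast_le]
    have h1 : m.natAbs + 1 ≤ 2 ^ (k - 1) := by omega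
    have h2 : Nat.clog 2 (m.natAbs + 1) ≤ k - 1 :=
      (Nat.clog_le_iff_le_pow (by norm_num)).mpr h1
    unfold len; omega
  -- closure under negation
  have hFpneg : ∀ x : ℚ, x ∈ Fp p → -x ∈ Fp p := by
    rintro x ⟨m, z, hx, hm, hz⟩
    refine ⟨-m, z, by rw [hx]; push_cast; ring, ?_, hz⟩
    simpa [len, Int.natAbs_neg] using hm
  -- main lemma for nonnegative r
  have key : ∀ r : ℚ, 0 ≤ r → truncNN q r ∈ Fp p := by
    intro r hr
    unfold truncNN
    split
    · exact ⟨q, q, rfl, hlen q (by omega), hlen q (by omega)⟩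
    · rename_i hle
      push_neg at hle
      set S : Set ℤ := {z : ℤ | -q ≤ z ∧ z ≤ q ∧ r * 2 ^ z ≤ (q : ℚ)} with hS
      have hne : S.Nonempty := by
        refine ⟨-q, le_refl _, by omega, ?_⟩
        have h2q : (0:ℚ) < (2:ℚ) ^ (q:ℤ) := by positivity
        rw [show ((-q : ℤ)) = -(q:ℤ) from rfl, zpow_neg]
        calc r * ((2:ℚ) ^ (q:ℤ))⁻¹ ≤ ((q:ℚ) * 2 ^ (q:ℤ)) * ((2:ℚ) ^ (q:ℤ))⁻¹ := by
              gcongr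
        _ = (q : ℚ) := by
              rw [mul_assoc, mul_inv_cancel₀ (by positivity), mul_one]
      have hbdd : BddAbove S := ⟨q, fun z hz => hz.2.1⟩
      have hmem : zsel q r ∈ S := by
        rw [zsel, ← hS]; exact Int.csSup_mem hne hbdd
      obtain ⟨hz1, hz2, hz3⟩ := hmem
      set z := zsel q r
      refine ⟨⌊r * 2 ^ z⌋, -z, rfl, ?_, ?_⟩
      · apply hlen
        have h0 : 0 ≤ ⌊r * 2 ^ z⌋ := Int.floor_nonneg.mpr (by positivity)
        have h1 : ⌊r * 2 ^ z⌋ ≤ q := by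
          have := Int.floor_mono hz3
          simpa using this
        omega
      · apply hlen; omega
  unfold trunc
  split
  · rename_i h
    exact hFpneg _ (key (-r) (by linarith))
  · rename_i h
    exact key r (by linarith [not_lt.mp h])
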